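/- arXiv:1505.07905 — 3 statements merged into one kernel-verified Lean document; each statement's English description precedes it below -/
import Mathlib

section
/- The disjunctive sum of two guaranteed scoring games is a guaranteed scoring game. -/
/-- A scoring game: `la`/`ra` are the atom values (relevant when the
corresponding option list is empty), `L`/`R` the Left and Right options. -/
inductive SG : Type
  | mk (la ra : ℝ) (L R : List SG) : SG

namespace SG

theorem sizeOf_lt_of_mem {g : SG} {l : List SG} (h : g ∈ l) : sizeOf g < sizeOf l :=
  List.sizeOf_lt_of_mem h

noncomputable instance : DecidableEq SG := Classical.decEq _

def la : SG → ℝ | mk a _ _ _ => a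
def ra : SG → ℝ | mk _ b _ _ => b
def L : SG → List SG | mk _ _ l _ => l
def R : SG → List SG | mk _ _ _ r => r

/-- The list of atom values occurring in atomic followers of a game. -/
def atomList : SG → List ℝ
  | mk a b ls rs =>
    (if ls.isEmpty then [a] else (ls.attach.map (fun x => atomList x.1)).flatten)
    ++ (if rs.isEmpty then [b] else (rs.attach.map (fun x => atomList x.1)).flatten)
decreasing_by all_goals (simp only [SG.mk.sizeOf_spec]; (first | (have := sizeOf_lt_of_mem x.2) | (have := sizeOf_lt_of_mem (by assumption : x ∈ _))); omega)

/-- The guaranteed condition. -/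
def Guaranteed : SG → Prop
  | mk a b ls rs =>
    (∀ x ∈ ls, Guaranteed x) ∧ (∀ x ∈ rs, Guaranteed x) ∧
    (ls = [] → ∀ s ∈ (mk a b ls rs).atomList, a ≤ s) ∧
    (rs = [] → ∀ s ∈ (mk a b ls rs).atomList, s ≤ b)
decreasing_by all_goals (simp only [SG.mk.sizeOf_spec]; (first | (have := sizeOf_lt_of_mem x.2) | (have := sizeOf_lt_of_mem (by assumption : x ∈ _))); omega)

/-- Disjunctive sum. -/
noncomputable def add : SG → SG → SG
  | mk a1 b1 L1 R1, mk a2 b2 L2 R2 =>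
    mk (a1 + a2) (b1 + b2)
      (L1.attach.map (fun x => add x.1 (mk a2 b2 L2 R2))
        ++ L2.attach.map (fun x => add (mk a1 b1 L1 R1) x.1))
      (R1.attach.map (fun x => add x.1 (mk a2 b2 L2 R2))
        ++ R2.attach.map (fun x => add (mk a1 b1 L1 R1) x.1))
termination_by g h => sizeOf g + sizeOf h
decreasing_by all_goals (simp only [SG.mk.sizeOf_spec]; (first | (have := sizeOf_lt_of_mem x.2) | (have := sizeOf_lt_of_mem (by assumption : x ∈ _))); omega)

/-- Left- and Right-stops (as a pair). -/
noncomputable def stops : SG → ℝ × ℝ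
  | mk a b ls rs =>
    (if ls.isEmpty then a else (WithBot.unbotD 0 (ls.attach.map (fun x => (stops x.1).2)).maximum),
     if rs.isEmpty then b else (WithTop.untopD 0 (rs.attach.map (fun x => (stops x.1).1)).minimum))
decreasing_by all_goals (simp only [SG.mk.sizeOf_spec]; (first | (have := sizeOf_lt_of_mem x.2) | (have := sizeOf_lt_of_mem (by assumption : x ∈ _))); omega)

noncomputable def Ls (g : SG) : ℝ := g.stops.1
noncomputable def Rs (g : SG) : ℝ := g.stops.2

/-- The conjugate: interchange Left and Right and negate atoms. -/
noncomputable def conj : SG → SG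
  | mk a b ls rs =>
    mk (-b) (-a) (rs.attach.map (fun x => conj x.1)) (ls.attach.map (fun x => conj x.1))
decreasing_by all_goals (simp only [SG.mk.sizeOf_spec]; (first | (have := sizeOf_lt_of_mem x.2) | (have := sizeOf_lt_of_mem (by assumption : x ∈ _))); omega)

/-- The game ⟨∅^s | ∅^s⟩ of a real number `s`. -/
def num (s : ℝ) : SG := mk s s [] []

/-- The zero game ⟨∅^0 | ∅^0⟩. -/
def zero : SG := num 0

/-- Waiting moves: the image of the Normal-play integer `n`. -/
def wait : ℕ → SG
  | 0 => zero
  | n + 1 => mk 0 0 [wait n] []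

/-- Birthday: the depth of the game tree. -/
def birthday : SG → ℕ
  | mk _ _ ls rs =>
    max (WithBot.unbotD 0 (ls.attach.map (fun x => birthday x.1 + 1)).maximum)
        (WithBot.unbotD 0 (rs.attach.map (fun x => birthday x.1 + 1)).maximum)
decreasing_by all_goals (simp only [SG.mk.sizeOf_spec]; (first | (have := sizeOf_lt_of_mem x.2) | (have := sizeOf_lt_of_mem (by assumption : x ∈ _))); omega)

/-- `Ge G H` is the order `G ≽ H`. -/
def Ge (G H : SG) : Prop :=
  ∀ X : SG, X.Guaranteed → Ls (G.add X) ≥ Ls (H.add X) ∧ Rs (G.add X) ≥ Rs (H.add X)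

/-- Equivalence `G ∼ H`. -/
def Equiv (G H : SG) : Prop := Ge G H ∧ Ge H G

/-- Right's pass-allowed Left-stop `L̲s(G) = min_n Ls(G - n̂)`. -/
noncomputable def lsU (G : SG) : ℝ := ⨅ n : ℕ, Ls (G.add (wait n).conj)

/-- Left's pass-allowed Right-stop `R̄s(G) = max_n Rs(G + n̂)`. -/
noncomputable def rsO (G : SG) : ℝ := ⨆ n : ℕ, Rs (G.add (wait n))

/-- `L̄s(G) = max_n Ls(G + n̂)`. -/
noncomputable def lsO (G : SG) : ℝ := ⨆ n : ℕ, Ls (G.add (wait n))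

/-- `R̲s(G) = min_n Rs(G + n̂)`. -/
noncomputable def rsU (G : SG) : ℝ := ⨅ n : ℕ, Rs (G.add (wait n))

/-- Identity of games: same tree structure (up to reordering of options),
with identical atoms at atomic positions. -/
def Ident : SG → SG → Prop
  | mk a1 b1 L1 R1, mk a2 b2 L2 R2 =>
    (L1 = [] ↔ L2 = []) ∧ (L1 = [] → a1 = a2) ∧
    (R1 = [] ↔ R2 = []) ∧ (R1 = [] → b1 = b2) ∧
    (∀ x ∈ L1, ∃ y : {z // z ∈ L2}, Ident x y.1) ∧
    (∀ y ∈ L2, ∃ x : {z // z ∈ L1}, Ident x.1 y) ∧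
    (∀ x ∈ R1, ∃ y : {z // z ∈ R2}, Ident x y.1) ∧
    (∀ y ∈ R2, ∃ x : {z // z ∈ R1}, Ident x.1 y)
termination_by g h => sizeOf g
decreasing_by all_goals (simp only [SG.mk.sizeOf_spec]; (first | (have := sizeOf_lt_of_mem x.2) | (have := sizeOf_lt_of_mem (by assumption : x ∈ _))); omega)

/-- `Linked H G`: `H` is linked to `G` (by some guaranteed `T`). -/
def Linked (H G : SG) : Prop :=
  ∃ T : SG, T.Guaranteed ∧ Ls (H.add T) < 0 ∧ 0 < Rs (G.add T)

/-- Replace every atom of `G` by `∅^x`. -/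
def subst (v : ℝ) : SG → SG
  | mk _ _ ls rs =>
    mk v v (ls.attach.map (fun x => subst v x.1)) (rs.attach.map (fun x => subst v x.1))
decreasing_by all_goals (simp only [SG.mk.sizeOf_spec]; (first | (have := sizeOf_lt_of_mem x.2) | (have := sizeOf_lt_of_mem (by assumption : x ∈ _))); omega)

/-- The maximum atom value in `G`. -/
noncomputable def maxAtom (G : SG) : ℝ := WithBot.unbotD 0 G.atomList.maximum

/-- The minimum atom value in `G`. -/
noncomputable def minAtom (G : SG) : ℝ := WithTop.untopD 0 G.atomList.minimum

/-
Every atom of `G + H` is a sum `s + t` of an atom `s` of `G` and an atom `t` of `H`, since atoms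
of the sum only arise where both components are atomic on the same side. Hence the atom
inequalities of `G` and `H` add up to those of `G + H`, while the options of `G + H` are sums
with one component replaced by an option, which are guaranteed by induction.
-/

theorem add_mk_mk (a1 b1 a2 b2 : ℝ) (L1 R1 L2 R2 : List SG) :
    (mk a1 b1 L1 R1).add (mk a2 b2 L2 R2) =
      mk (a1 + a2) (b1 + b2)
        (L1.map (·.add (mk a2 b2 L2 R2)) ++ L2.map ((mk a1 b1 L1 R1).add ·))
        (R1.map (·.add (mk a2 b2 L2 R2)) ++ R2.map ((mk a1 b1 L1 R1).add ·)) := by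
  rw [add]
  simp

theorem mem_atomList_mk {a b u : ℝ} {ls rs : List SG} :
    u ∈ (mk a b ls rs).atomList ↔
      (ls = [] ∧ u = a ∨ ∃ x ∈ ls, u ∈ x.atomList) ∨
        (rs = [] ∧ u = b ∨ ∃ x ∈ rs, u ∈ x.atomList) := by
  rw [atomList]
  cases ls <;> cases rs <;> simp [or_assoc]

theorem guaranteed_mk_iff {a b : ℝ} {ls rs : List SG} :
    (mk a b ls rs).Guaranteed ↔
      (∀ x ∈ ls, x.Guaranteed) ∧ (∀ x ∈ rs, x.Guaranteed) ∧
        (ls = [] → ∀ s ∈ (mk a b ls rs).atomList, a ≤ s) ∧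
        (rs = [] → ∀ s ∈ (mk a b ls rs).atomList, s ≤ b) := by
  rw [Guaranteed]

theorem mem_atomList_mk_nil_L (a b : ℝ) (rs : List SG) : a ∈ (mk a b [] rs).atomList :=
  mem_atomList_mk.2 (.inl (.inl ⟨rfl, rfl⟩))

theorem mem_atomList_mk_nil_R (a b : ℝ) (ls : List SG) : b ∈ (mk a b ls []).atomList :=
  mem_atomList_mk.2 (.inr (.inl ⟨rfl, rfl⟩))

theorem atomList_subset_of_mem_L {x : SG} {a b : ℝ} {ls rs : List SG} (hx : x ∈ ls) :
    x.atomList ⊆ (mk a b ls rs).atomList :=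
  fun _ hu => mem_atomList_mk.2 (Or.inl (Or.inr ⟨x, hx, hu⟩))

theorem atomList_subset_of_mem_R {x : SG} {a b : ℝ} {ls rs : List SG} (hx : x ∈ rs) :
    x.atomList ⊆ (mk a b ls rs).atomList :=
  fun _ hu => mem_atomList_mk.2 (Or.inr (Or.inr ⟨x, hx, hu⟩))

theorem exists_add_eq_of_mem_atomList_add :
    ∀ (G H : SG) {u : ℝ}, u ∈ (G.add H).atomList → ∃ s ∈ G.atomList, ∃ t ∈ H.atomList, s + t = u
  | mk a1 b1 L1 R1, mk a2 b2 L2 R2, u, hu => by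
    rw [add_mk_mk, mem_atomList_mk] at hu
    simp only [List.append_eq_nil_iff, List.map_eq_nil_iff, List.mem_append, List.mem_map] at hu
    rcases hu with (⟨⟨rfl, rfl⟩, rfl⟩ | ⟨_, (⟨x, hx, rfl⟩ | ⟨x, hx, rfl⟩), hu⟩) |
        (⟨⟨rfl, rfl⟩, rfl⟩ | ⟨_, (⟨x, hx, rfl⟩ | ⟨x, hx, rfl⟩), hu⟩)
    · exact ⟨a1, mem_atomList_mk_nil_L _ _ _, a2, mem_atomList_mk_nil_L _ _ _, rfl⟩
    · obtain ⟨s, hs, t, ht, rfl⟩ := exists_add_eq_of_mem_atomList_add x _ hu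
      exact ⟨s, atomList_subset_of_mem_L hx hs, t, ht, rfl⟩
    · obtain ⟨s, hs, t, ht, rfl⟩ := exists_add_eq_of_mem_atomList_add _ x hu
      exact ⟨s, hs, t, atomList_subset_of_mem_L hx ht, rfl⟩
    · exact ⟨b1, mem_atomList_mk_nil_R _ _ _, b2, mem_atomList_mk_nil_R _ _ _, rfl⟩
    · obtain ⟨s, hs, t, ht, rfl⟩ := exists_add_eq_of_mem_atomList_add x _ hu
      exact ⟨s, atomList_subset_of_mem_R hx hs, t, ht, rfl⟩
    · obtain ⟨s, hs, t, ht, rfl⟩ := exists_add_eq_of_mem_atomList_add _ x hu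
      exact ⟨s, hs, t, atomList_subset_of_mem_R hx ht, rfl⟩
termination_by G H => sizeOf G + sizeOf H
decreasing_by all_goals (simp only [mk.sizeOf_spec]; have := sizeOf_lt_of_mem hx; omega)

/-- The disjunctive sum of two guaranteed scoring games is guaranteed. -/
theorem guaranteed_add (G H : SG) (hG : G.Guaranteed) (hH : H.Guaranteed) :
    (G.add H).Guaranteed := by
  match G, H, hG, hH with
  | mk a1 b1 L1 R1, mk a2 b2 L2 R2, hG, hH =>
    obtain ⟨hGL, hGR, hGa, hGb⟩ := guaranteed_mk_iff.1 hG
    obtain ⟨hHL, hHR, hHa, hHb⟩ := guaranteed_mk_iff.1 hH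
    rw [add_mk_mk, guaranteed_mk_iff, ← add_mk_mk]
    simp only [List.append_eq_nil_iff, List.map_eq_nil_iff, List.mem_append, List.mem_map]
    refine ⟨?_, ?_, ?_, ?_⟩
    · rintro _ (⟨x, hx, rfl⟩ | ⟨x, hx, rfl⟩)
      exacts [guaranteed_add x _ (hGL x hx) hH, guaranteed_add _ x hG (hHL x hx)]
    · rintro _ (⟨x, hx, rfl⟩ | ⟨x, hx, rfl⟩)
      exacts [guaranteed_add x _ (hGR x hx) hH, guaranteed_add _ x hG (hHR x hx)]
    · rintro ⟨hL1, hL2⟩ u hu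
      obtain ⟨s, hs, t, ht, rfl⟩ := exists_add_eq_of_mem_atomList_add _ _ hu
      exact add_le_add (hGa hL1 s hs) (hHa hL2 t ht)
    · rintro ⟨hR1, hR2⟩ u hu
      obtain ⟨s, hs, t, ht, rfl⟩ := exists_add_eq_of_mem_atomList_add _ _ hu
      exact add_le_add (hGb hR1 s hs) (hHb hR2 t ht)
termination_by sizeOf G + sizeOf H
decreasing_by all_goals (simp only [mk.sizeOf_spec]; have := sizeOf_lt_of_mem hx; omega)

end SG
end

section
/- Projection Theorem: for a guaranteed scoring game G with birthday n, (1) G_min ≼ G ≼ G_max, and (2) min(G) − n̂ ≼ G ≼ max(G) + n̂, where G_x is G with every atom replaced by ∅^x, max(G) and min(G) are the maximum and minimum atom values in G, and scores/numbers s denote the game ⟨∅^s|∅^s⟩. -/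
namespace List

variable {α : Type*} [LinearOrder α] {l : List α} {a d : α}

theorem le_unbotD_maximum_of_mem (ha : a ∈ l) : a ≤ l.maximum.unbotD d :=
  (WithBot.le_unbotD_iff (maximum_ne_bot_of_ne_nil (ne_nil_of_mem ha))).2 (le_maximum_of_mem' ha)

theorem unbotD_maximum_le (hl : l ≠ []) (h : ∀ b ∈ l, b ≤ a) : l.maximum.unbotD d ≤ a :=
  (WithBot.unbotD_le_iff fun h' => absurd (maximum_eq_bot.1 h') hl).2
    (maximum_le_of_forall_le fun b hb => WithBot.coe_le_coe.2 (h b hb))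

theorem untopD_minimum_le_of_mem (ha : a ∈ l) : l.minimum.untopD d ≤ a :=
  (WithTop.untopD_le_iff (minimum_ne_top_of_ne_nil (ne_nil_of_mem ha))).2 (minimum_le_of_mem' ha)

theorem le_untopD_minimum (hl : l ≠ []) (h : ∀ b ∈ l, a ≤ b) : a ≤ l.minimum.untopD d :=
  (WithTop.le_untopD_iff fun h' => absurd (minimum_eq_top.1 h') hl).2
    (le_minimum_of_forall_le fun b hb => WithTop.coe_le_coe.2 (h b hb))

end List

namespace SG

@[simp] theorem la_mk (a b : ℝ) (ls rs : List SG) : la (mk a b ls rs) = a := rfl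
@[simp] theorem ra_mk (a b : ℝ) (ls rs : List SG) : ra (mk a b ls rs) = b := rfl
@[simp] theorem L_mk (a b : ℝ) (ls rs : List SG) : L (mk a b ls rs) = ls := rfl
@[simp] theorem R_mk (a b : ℝ) (ls rs : List SG) : R (mk a b ls rs) = rs := rfl

theorem induction_on {P : SG → Prop}
    (h : ∀ g, (∀ x ∈ g.L, P x) → (∀ x ∈ g.R, P x) → P g) (g : SG) : P g := by
  obtain ⟨a, b, ls, rs⟩ := g
  exact h _ (fun x (hx : x ∈ ls) => induction_on h x) (fun x (hx : x ∈ rs) => induction_on h x)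
termination_by sizeOf g
decreasing_by all_goals (simp only [SG.mk.sizeOf_spec]; have := sizeOf_lt_of_mem hx; omega)

theorem induction_on₂ {P : SG → SG → Prop}
    (h : ∀ g x, (∀ g' ∈ g.L, P g' x) → (∀ g' ∈ g.R, P g' x) →
      (∀ x' ∈ x.L, P g x') → (∀ x' ∈ x.R, P g x') → P g x) (g x : SG) : P g x := by
  induction g using induction_on generalizing x with
  | h g ihL ihR =>
    induction x using induction_on with
    | h x ihL' ihR' =>
      exact h g x (fun g' hg' => ihL g' hg' x) (fun g' hg' => ihR g' hg' x) ihL' ihR'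

@[simp] theorem la_add (g h : SG) : (g.add h).la = g.la + h.la := by
  cases g; cases h; rw [add]; rfl

@[simp] theorem ra_add (g h : SG) : (g.add h).ra = g.ra + h.ra := by
  cases g; cases h; rw [add]; rfl

theorem L_add (g h : SG) : (g.add h).L = g.L.map (·.add h) ++ h.L.map g.add := by
  cases g; cases h; rw [add]; simp

theorem R_add (g h : SG) : (g.add h).R = g.R.map (·.add h) ++ h.R.map g.add := by
  cases g; cases h; rw [add]; simp

theorem mem_L_add {g h y : SG} :
    y ∈ (g.add h).L ↔ (∃ g' ∈ g.L, g'.add h = y) ∨ ∃ h' ∈ h.L, g.add h' = y := by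
  simp [L_add]

theorem mem_R_add {g h y : SG} :
    y ∈ (g.add h).R ↔ (∃ g' ∈ g.R, g'.add h = y) ∨ ∃ h' ∈ h.R, g.add h' = y := by
  simp [R_add]

@[simp] theorem L_add_eq_nil {g h : SG} : (g.add h).L = [] ↔ g.L = [] ∧ h.L = [] := by
  simp [L_add]

@[simp] theorem R_add_eq_nil {g h : SG} : (g.add h).R = [] ↔ g.R = [] ∧ h.R = [] := by
  simp [R_add]

@[simp] theorem la_subst (v : ℝ) (g : SG) : (subst v g).la = v := by
  cases g; rw [subst]; rfl

@[simp] theorem ra_subst (v : ℝ) (g : SG) : (subst v g).ra = v := by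
  cases g; rw [subst]; rfl

@[simp] theorem L_subst (v : ℝ) (g : SG) : (subst v g).L = g.L.map (subst v) := by
  cases g; rw [subst]; simp

@[simp] theorem R_subst (v : ℝ) (g : SG) : (subst v g).R = g.R.map (subst v) := by
  cases g; rw [subst]; simp

theorem atomList_eq (g : SG) : g.atomList =
    (if g.L = [] then [g.la] else (g.L.map atomList).flatten) ++
      (if g.R = [] then [g.ra] else (g.R.map atomList).flatten) := by
  cases g; rw [atomList]; simp only [List.isEmpty_iff, List.map_subtype, List.unattach_attach]; rfl

theorem guaranteed_iff (g : SG) : g.Guaranteed ↔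
    (∀ x ∈ g.L, x.Guaranteed) ∧ (∀ x ∈ g.R, x.Guaranteed) ∧
    (g.L = [] → ∀ s ∈ g.atomList, g.la ≤ s) ∧
      (g.R = [] → ∀ s ∈ g.atomList, s ≤ g.ra) := by
  cases g; rw [Guaranteed]; rfl

theorem birthday_eq (g : SG) : g.birthday =
    max ((g.L.map (birthday · + 1)).maximum.unbotD 0)
      ((g.R.map (birthday · + 1)).maximum.unbotD 0) := by
  cases g; rw [birthday]; simp

section Stops

variable {g x : SG} {c : ℝ}

theorem Ls_eq (g : SG) :
    g.Ls = if g.L = [] then g.la else (g.L.map Rs).maximum.unbotD 0 := by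
  cases g; rw [Ls, stops]
  simp only [List.isEmpty_iff, List.map_subtype, List.unattach_attach]; rfl

theorem Rs_eq (g : SG) :
    g.Rs = if g.R = [] then g.ra else (g.R.map Ls).minimum.untopD 0 := by
  cases g; rw [Rs, stops]
  simp only [List.isEmpty_iff, List.map_subtype, List.unattach_attach]; rfl

theorem Ls_of_L_eq_nil (h : g.L = []) : g.Ls = g.la := by
  rw [Ls_eq, if_pos h]

theorem Rs_of_R_eq_nil (h : g.R = []) : g.Rs = g.ra := by
  rw [Rs_eq, if_pos h]

theorem Rs_le_Ls_of_mem_L (hx : x ∈ g.L) : x.Rs ≤ g.Ls := by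
  rw [Ls_eq, if_neg (List.ne_nil_of_mem hx)]
  exact List.le_unbotD_maximum_of_mem (List.mem_map_of_mem hx)

theorem Rs_le_Ls_of_mem_R (hx : x ∈ g.R) : g.Rs ≤ x.Ls := by
  rw [Rs_eq, if_neg (List.ne_nil_of_mem hx)]
  exact List.untopD_minimum_le_of_mem (List.mem_map_of_mem hx)

theorem Ls_le_of_forall_Rs_le (hL : g.L ≠ []) (h : ∀ x ∈ g.L, x.Rs ≤ c) : g.Ls ≤ c := by
  rw [Ls_eq, if_neg hL]
  exact List.unbotD_maximum_le (by simpa using hL) (by simpa using h)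

theorem le_Rs_of_forall_le_Ls (hR : g.R ≠ []) (h : ∀ x ∈ g.R, c ≤ x.Ls) : c ≤ g.Rs := by
  rw [Rs_eq, if_neg hR]
  exact List.le_untopD_minimum (by simpa using hR) (by simpa using h)

theorem Ls_le_Ls {A B : SG} (hla : A.L = [] → A.la ≤ B.Ls)
    (hL : ∀ a ∈ A.L, ∃ b ∈ B.L, a.Rs ≤ b.Rs) : A.Ls ≤ B.Ls := by
  by_cases hA : A.L = []
  · exact (Ls_of_L_eq_nil hA).trans_le (hla hA)
  · refine Ls_le_of_forall_Rs_le hA fun a ha => ?_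
    obtain ⟨b, hb, hab⟩ := hL a ha
    exact hab.trans (Rs_le_Ls_of_mem_L hb)

theorem Rs_le_Rs {A B : SG} (hra : B.R = [] → A.Rs ≤ B.ra)
    (hR : ∀ b ∈ B.R, ∃ a ∈ A.R, a.Ls ≤ b.Ls) : A.Rs ≤ B.Rs := by
  by_cases hB : B.R = []
  · exact (hra hB).trans_eq (Rs_of_R_eq_nil hB).symm
  · refine le_Rs_of_forall_le_Ls hB fun b hb => ?_
    obtain ⟨a, ha, hab⟩ := hR b hb
    exact (Rs_le_Ls_of_mem_R ha).trans hab

end Stops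

section Atoms

variable {g x : SG}

theorem mem_atomList {s : ℝ} : s ∈ g.atomList ↔
    (g.L = [] ∧ s = g.la) ∨ (∃ x ∈ g.L, s ∈ x.atomList) ∨
      (g.R = [] ∧ s = g.ra) ∨ ∃ x ∈ g.R, s ∈ x.atomList := by
  rw [atomList_eq]
  by_cases hL : g.L = [] <;> by_cases hR : g.R = [] <;> simp [hL, hR]

theorem la_mem_atomList (h : g.L = []) : g.la ∈ g.atomList :=
  mem_atomList.2 (.inl ⟨h, rfl⟩)

theorem ra_mem_atomList (h : g.R = []) : g.ra ∈ g.atomList :=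
  mem_atomList.2 (.inr (.inr (.inl ⟨h, rfl⟩)))

theorem atomList_subset_of_mem_L_s9 (hx : x ∈ g.L) : x.atomList ⊆ g.atomList :=
  fun _ hs => mem_atomList.2 (.inr (.inl ⟨x, hx, hs⟩))

theorem atomList_subset_of_mem_R_s9 (hx : x ∈ g.R) : x.atomList ⊆ g.atomList :=
  fun _ hs => mem_atomList.2 (.inr (.inr (.inr ⟨x, hx, hs⟩)))

theorem minAtom_le {s : ℝ} (hs : s ∈ g.atomList) : g.minAtom ≤ s :=
  List.untopD_minimum_le_of_mem hs

theorem le_maxAtom {s : ℝ} (hs : s ∈ g.atomList) : s ≤ g.maxAtom :=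
  List.le_unbotD_maximum_of_mem hs

theorem exists_add_of_mem_atomList_add {s : ℝ} (G X : SG) (hs : s ∈ (G.add X).atomList) :
    ∃ a ∈ G.atomList, ∃ b ∈ X.atomList, a + b = s := by
  induction G, X using induction_on₂ with
  | h G X ihGL ihGR ihXL ihXR =>
    rcases mem_atomList.1 hs with ⟨hL, rfl⟩ | ⟨y, hy, hs⟩ | ⟨hR, rfl⟩ | ⟨y, hy, hs⟩
    · obtain ⟨hGL, hXL⟩ := L_add_eq_nil.1 hL
      exact ⟨_, la_mem_atomList hGL, _, la_mem_atomList hXL, (la_add G X).symm⟩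
    · rcases mem_L_add.1 hy with ⟨g', hg', rfl⟩ | ⟨x', hx', rfl⟩
      · obtain ⟨a, ha, b, hb, rfl⟩ := ihGL g' hg' hs
        exact ⟨a, atomList_subset_of_mem_L_s9 hg' ha, b, hb, rfl⟩
      · obtain ⟨a, ha, b, hb, rfl⟩ := ihXL x' hx' hs
        exact ⟨a, ha, b, atomList_subset_of_mem_L_s9 hx' hb, rfl⟩
    · obtain ⟨hGR, hXR⟩ := R_add_eq_nil.1 hR
      exact ⟨_, ra_mem_atomList hGR, _, ra_mem_atomList hXR, (ra_add G X).symm⟩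
    · rcases mem_R_add.1 hy with ⟨g', hg', rfl⟩ | ⟨x', hx', rfl⟩
      · obtain ⟨a, ha, b, hb, rfl⟩ := ihGR g' hg' hs
        exact ⟨a, atomList_subset_of_mem_R_s9 hg' ha, b, hb, rfl⟩
      · obtain ⟨a, ha, b, hb, rfl⟩ := ihXR x' hx' hs
        exact ⟨a, ha, b, atomList_subset_of_mem_R_s9 hx' hb, rfl⟩

end Atoms

theorem Guaranteed.of_mem_L {g x : SG} (hg : g.Guaranteed) (hx : x ∈ g.L) : x.Guaranteed :=
  ((guaranteed_iff g).1 hg).1 x hx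

theorem Guaranteed.of_mem_R {g x : SG} (hg : g.Guaranteed) (hx : x ∈ g.R) : x.Guaranteed :=
  ((guaranteed_iff g).1 hg).2.1 x hx

theorem Guaranteed.la_le {g : SG} (hg : g.Guaranteed) (h : g.L = []) {s : ℝ}
    (hs : s ∈ g.atomList) : g.la ≤ s :=
  ((guaranteed_iff g).1 hg).2.2.1 h s hs

theorem Guaranteed.le_ra {g : SG} (hg : g.Guaranteed) (h : g.R = []) {s : ℝ}
    (hs : s ∈ g.atomList) : s ≤ g.ra :=
  ((guaranteed_iff g).1 hg).2.2.2 h s hs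

theorem birthday_lt_of_mem_L {g x : SG} (hx : x ∈ g.L) : x.birthday < g.birthday := by
  have := List.le_unbotD_maximum_of_mem (d := 0) (List.mem_map_of_mem (f := (birthday · + 1)) hx)
  rw [birthday_eq g]
  omega

theorem birthday_lt_of_mem_R {g x : SG} (hx : x ∈ g.R) : x.birthday < g.birthday := by
  have := List.le_unbotD_maximum_of_mem (d := 0) (List.mem_map_of_mem (f := (birthday · + 1)) hx)
  rw [birthday_eq g]
  omega

theorem le_stops_of_forall_le_atomList {m : ℝ} (g : SG) (hm : ∀ s ∈ g.atomList, m ≤ s) :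
    m ≤ g.Ls ∧ m ≤ g.Rs := by
  induction g using induction_on with
  | h g ihL ihR =>
    constructor
    · by_cases hL : g.L = []
      · exact (Ls_of_L_eq_nil hL).symm ▸ hm _ (la_mem_atomList hL)
      · obtain ⟨x, hx⟩ := List.exists_mem_of_ne_nil _ hL
        exact ((ihL x hx fun s hs => hm s (atomList_subset_of_mem_L_s9 hx hs)).2).trans
          (Rs_le_Ls_of_mem_L hx)
    · by_cases hR : g.R = []
      · exact (Rs_of_R_eq_nil hR).symm ▸ hm _ (ra_mem_atomList hR)
      · exact le_Rs_of_forall_le_Ls hR fun x hx =>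
          (ihR x hx fun s hs => hm s (atomList_subset_of_mem_R_s9 hx hs)).1

theorem stops_le_of_forall_atomList_le {m : ℝ} (g : SG) (hm : ∀ s ∈ g.atomList, s ≤ m) :
    g.Ls ≤ m ∧ g.Rs ≤ m := by
  induction g using induction_on with
  | h g ihL ihR =>
    constructor
    · by_cases hL : g.L = []
      · exact (Ls_of_L_eq_nil hL).symm ▸ hm _ (la_mem_atomList hL)
      · exact Ls_le_of_forall_Rs_le hL fun x hx =>
          (ihL x hx fun s hs => hm s (atomList_subset_of_mem_L_s9 hx hs)).2
    · by_cases hR : g.R = []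
      · exact (Rs_of_R_eq_nil hR).symm ▸ hm _ (ra_mem_atomList hR)
      · obtain ⟨x, hx⟩ := List.exists_mem_of_ne_nil _ hR
        exact (Rs_le_Ls_of_mem_R hx).trans
          (ihR x hx fun s hs => hm s (atomList_subset_of_mem_R_s9 hx hs)).1

theorem add_le_Ls_add {G X : SG} {m₁ m₂ : ℝ} (hG : ∀ s ∈ G.atomList, m₁ ≤ s)
    (hX : ∀ s ∈ X.atomList, m₂ ≤ s) : m₁ + m₂ ≤ (G.add X).Ls := by
  refine (le_stops_of_forall_le_atomList _ fun s hs => ?_).1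
  obtain ⟨a, ha, b, hb, rfl⟩ := exists_add_of_mem_atomList_add G X hs
  exact add_le_add (hG a ha) (hX b hb)

theorem Rs_add_le_add {G X : SG} {m₁ m₂ : ℝ} (hG : ∀ s ∈ G.atomList, s ≤ m₁)
    (hX : ∀ s ∈ X.atomList, s ≤ m₂) : (G.add X).Rs ≤ m₁ + m₂ := by
  refine (stops_le_of_forall_atomList_le _ fun s hs => ?_).2
  obtain ⟨a, ha, b, hb, rfl⟩ := exists_add_of_mem_atomList_add G X hs
  exact add_le_add (hG a ha) (hX b hb)

section Subst

variable {m : ℝ}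

theorem stops_subst_add_le (G X : SG) (hm : ∀ s ∈ G.atomList, m ≤ s) :
    ((G.subst m).add X).Ls ≤ (G.add X).Ls ∧ ((G.subst m).add X).Rs ≤ (G.add X).Rs := by
  induction G, X using induction_on₂ with
  | h G X ihGL ihGR ihXL ihXR =>
    constructor
    · refine Ls_le_Ls (fun hA => ?_) fun a ha => ?_
      · obtain ⟨hGL, hXL⟩ := L_add_eq_nil.1 hA
        rw [L_subst, List.map_eq_nil_iff] at hGL
        rw [Ls_of_L_eq_nil (L_add_eq_nil.2 ⟨hGL, hXL⟩), la_add, la_add, la_subst]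
        exact add_le_add_left (hm _ (la_mem_atomList hGL)) _
      · rcases mem_L_add.1 ha with ⟨g'', hg'', rfl⟩ | ⟨x', hx', rfl⟩
        · obtain ⟨g', hg', rfl⟩ := List.mem_map.1 ((L_subst m G) ▸ hg'')
          exact ⟨g'.add X, mem_L_add.2 (.inl ⟨g', hg', rfl⟩),
            (ihGL g' hg' fun s hs => hm s (atomList_subset_of_mem_L_s9 hg' hs)).2⟩
        · exact ⟨G.add x', mem_L_add.2 (.inr ⟨x', hx', rfl⟩), (ihXL x' hx' hm).2⟩
    · refine Rs_le_Rs (fun hB => ?_) fun b hb => ?_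
      · obtain ⟨hGR, hXR⟩ := R_add_eq_nil.1 hB
        rw [Rs_of_R_eq_nil (R_add_eq_nil.2 ⟨by simpa using hGR, hXR⟩), ra_add, ra_add, ra_subst]
        exact add_le_add_left (hm _ (ra_mem_atomList hGR)) _
      · rcases mem_R_add.1 hb with ⟨g', hg', rfl⟩ | ⟨x', hx', rfl⟩
        · refine ⟨(g'.subst m).add X, mem_R_add.2 (.inl ⟨_, ?_, rfl⟩),
            (ihGR g' hg' fun s hs => hm s (atomList_subset_of_mem_R_s9 hg' hs)).1⟩
          exact R_subst m G ▸ List.mem_map_of_mem hg'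
        · exact ⟨(G.subst m).add x', mem_R_add.2 (.inr ⟨x', hx', rfl⟩), (ihXR x' hx' hm).1⟩

theorem stops_add_le_subst_add (G X : SG) (hm : ∀ s ∈ G.atomList, s ≤ m) :
    (G.add X).Ls ≤ ((G.subst m).add X).Ls ∧ (G.add X).Rs ≤ ((G.subst m).add X).Rs := by
  induction G, X using induction_on₂ with
  | h G X ihGL ihGR ihXL ihXR =>
    constructor
    · refine Ls_le_Ls (fun hA => ?_) fun a ha => ?_
      · obtain ⟨hGL, hXL⟩ := L_add_eq_nil.1 hA
        rw [Ls_of_L_eq_nil (L_add_eq_nil.2 ⟨by simpa using hGL, hXL⟩), la_add, la_add, la_subst]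
        exact add_le_add_left (hm _ (la_mem_atomList hGL)) _
      · rcases mem_L_add.1 ha with ⟨g', hg', rfl⟩ | ⟨x', hx', rfl⟩
        · refine ⟨(g'.subst m).add X, mem_L_add.2 (.inl ⟨_, ?_, rfl⟩),
            (ihGL g' hg' fun s hs => hm s (atomList_subset_of_mem_L_s9 hg' hs)).2⟩
          exact L_subst m G ▸ List.mem_map_of_mem hg'
        · exact ⟨(G.subst m).add x', mem_L_add.2 (.inr ⟨x', hx', rfl⟩), (ihXL x' hx' hm).2⟩
    · refine Rs_le_Rs (fun hB => ?_) fun b hb => ?_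
      · obtain ⟨hGR, hXR⟩ := R_add_eq_nil.1 hB
        rw [R_subst, List.map_eq_nil_iff] at hGR
        rw [Rs_of_R_eq_nil (R_add_eq_nil.2 ⟨hGR, hXR⟩), ra_add, ra_add, ra_subst]
        exact add_le_add_left (hm _ (ra_mem_atomList hGR)) _
      · rcases mem_R_add.1 hb with ⟨g'', hg'', rfl⟩ | ⟨x', hx', rfl⟩
        · obtain ⟨g', hg', rfl⟩ := List.mem_map.1 ((R_subst m G) ▸ hg'')
          exact ⟨g'.add X, mem_R_add.2 (.inl ⟨g', hg', rfl⟩),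
            (ihGR g' hg' fun s hs => hm s (atomList_subset_of_mem_R_s9 hg' hs)).1⟩
        · exact ⟨G.add x', mem_R_add.2 (.inr ⟨x', hx', rfl⟩), (ihXR x' hx' hm).1⟩

theorem ge_subst {G : SG} (hm : ∀ s ∈ G.atomList, m ≤ s) : G.Ge (G.subst m) :=
  fun X _ => stops_subst_add_le G X hm

theorem subst_ge {G : SG} (hm : ∀ s ∈ G.atomList, s ≤ m) : (G.subst m).Ge G :=
  fun X _ => stops_add_le_subst_add G X hm

end Subst

section Wait

variable {m : ℝ}

def subWait (m : ℝ) : ℕ → SG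
  | 0 => num m
  | k + 1 => mk m m [] [subWait m k]

def addWait (m : ℝ) : ℕ → SG
  | 0 => num m
  | k + 1 => mk m m [addWait m k] []

@[simp] theorem la_subWait (k : ℕ) : (subWait m k).la = m := by cases k <;> rfl
@[simp] theorem ra_subWait (k : ℕ) : (subWait m k).ra = m := by cases k <;> rfl
@[simp] theorem L_subWait (k : ℕ) : (subWait m k).L = [] := by cases k <;> rfl
@[simp] theorem R_subWait_succ (k : ℕ) : (subWait m (k + 1)).R = [subWait m k] := rfl

@[simp] theorem la_addWait (k : ℕ) : (addWait m k).la = m := by cases k <;> rfl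
@[simp] theorem ra_addWait (k : ℕ) : (addWait m k).ra = m := by cases k <;> rfl
@[simp] theorem R_addWait (k : ℕ) : (addWait m k).R = [] := by cases k <;> rfl
@[simp] theorem L_addWait_succ (k : ℕ) : (addWait m (k + 1)).L = [addWait m k] := rfl

theorem eq_of_mem_atomList_subWait {s : ℝ} : ∀ {k : ℕ}, s ∈ (subWait m k).atomList → s = m
  | 0, hs => by simpa [subWait, num, atomList_eq] using hs
  | k + 1, hs => by
    rcases mem_atomList.1 hs with ⟨-, rfl⟩ | ⟨x, hx, -⟩ | ⟨h, -⟩ | ⟨x, hx, hs⟩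
    · rfl
    · simp at hx
    · simp at h
    · rw [R_subWait_succ, List.mem_singleton] at hx
      exact eq_of_mem_atomList_subWait (hx ▸ hs)

theorem eq_of_mem_atomList_addWait {s : ℝ} : ∀ {k : ℕ}, s ∈ (addWait m k).atomList → s = m
  | 0, hs => by simpa [addWait, num, atomList_eq] using hs
  | k + 1, hs => by
    rcases mem_atomList.1 hs with ⟨h, -⟩ | ⟨x, hx, hs⟩ | ⟨-, rfl⟩ | ⟨x, hx, -⟩
    · simp at h
    · rw [L_addWait_succ, List.mem_singleton] at hx
      exact eq_of_mem_atomList_addWait (hx ▸ hs)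
    · rfl
    · simp at hx

theorem num_add_conj_wait (m : ℝ) : ∀ k, (num m).add (wait k).conj = subWait m k
  | 0 => by simp [wait, zero, num, conj, add, subWait]
  | k + 1 => by
    rw [wait, conj, num, add, subWait, ← num_add_conj_wait m k]
    simp [num]

theorem num_add_wait (m : ℝ) : ∀ k, (num m).add (wait k) = addWait m k
  | 0 => by simp [wait, zero, num, add, addWait]
  | k + 1 => by
    rw [wait, num, add, addWait, ← num_add_wait m k]
    simp [num]

theorem stops_subWait_add_le {k : ℕ} (G X : SG) (hX : X.Guaranteed)
    (hm : ∀ s ∈ G.atomList, m ≤ s) (hk : G.birthday ≤ k) :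
    ((subWait m k).add X).Ls ≤ (G.add X).Ls ∧ ((subWait m k).add X).Rs ≤ (G.add X).Rs := by
  induction G, X using induction_on₂ generalizing k with
  | h G X ihGL ihGR ihXL ihXR =>
    constructor
    · refine Ls_le_Ls (fun hA => ?_) fun a ha => ?_
      · rw [la_add, la_subWait]
        exact add_le_Ls_add hm fun s hs => hX.la_le (L_add_eq_nil.1 hA).2 hs
      · rcases mem_L_add.1 ha with ⟨t, ht, rfl⟩ | ⟨x', hx', rfl⟩
        · simp at ht
        · exact ⟨G.add x', mem_L_add.2 (.inr ⟨x', hx', rfl⟩),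
            (ihXL x' hx' (hX.of_mem_L hx') hm hk).2⟩
    · refine Rs_le_Rs (fun hB => ?_) fun b hb => ?_
      · obtain ⟨hGR, hXR⟩ := R_add_eq_nil.1 hB
        calc ((subWait m k).add X).Rs ≤ m + X.ra :=
              Rs_add_le_add (fun s hs => (eq_of_mem_atomList_subWait hs).le)
                fun s hs => hX.le_ra hXR hs
          _ ≤ (G.add X).ra := by
              rw [ra_add]; exact add_le_add_left (hm _ (ra_mem_atomList hGR)) _
      · rcases mem_R_add.1 hb with ⟨g', hg', rfl⟩ | ⟨x', hx', rfl⟩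
        · have hlt := (birthday_lt_of_mem_R hg').trans_le hk
          obtain ⟨k, rfl⟩ : ∃ k', k = k' + 1 := ⟨k - 1, by omega⟩
          exact ⟨(subWait m k).add X, mem_R_add.2 (.inl ⟨_, by simp, rfl⟩),
            (ihGR g' hg' hX (fun s hs => hm s (atomList_subset_of_mem_R_s9 hg' hs))
              (Nat.lt_succ_iff.1 hlt)).1⟩
        · exact ⟨(subWait m k).add x', mem_R_add.2 (.inr ⟨x', hx', rfl⟩),
            (ihXR x' hx' (hX.of_mem_R hx') hm hk).1⟩

theorem stops_add_le_addWait_add {k : ℕ} (G X : SG) (hX : X.Guaranteed)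
    (hm : ∀ s ∈ G.atomList, s ≤ m) (hk : G.birthday ≤ k) :
    (G.add X).Ls ≤ ((addWait m k).add X).Ls ∧ (G.add X).Rs ≤ ((addWait m k).add X).Rs := by
  induction G, X using induction_on₂ generalizing k with
  | h G X ihGL ihGR ihXL ihXR =>
    constructor
    · refine Ls_le_Ls (fun hA => ?_) fun a ha => ?_
      · obtain ⟨hGL, hXL⟩ := L_add_eq_nil.1 hA
        calc (G.add X).la ≤ m + X.la := by
              rw [la_add]; exact add_le_add_left (hm _ (la_mem_atomList hGL)) _
          _ ≤ ((addWait m k).add X).Ls :=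
              add_le_Ls_add (fun s hs => (eq_of_mem_atomList_addWait hs).ge)
                fun s hs => hX.la_le hXL hs
      · rcases mem_L_add.1 ha with ⟨g', hg', rfl⟩ | ⟨x', hx', rfl⟩
        · have hlt := (birthday_lt_of_mem_L hg').trans_le hk
          obtain ⟨k, rfl⟩ : ∃ k', k = k' + 1 := ⟨k - 1, by omega⟩
          exact ⟨(addWait m k).add X, mem_L_add.2 (.inl ⟨_, by simp, rfl⟩),
            (ihGL g' hg' hX (fun s hs => hm s (atomList_subset_of_mem_L_s9 hg' hs))
              (Nat.lt_succ_iff.1 hlt)).2⟩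
        · exact ⟨(addWait m k).add x', mem_L_add.2 (.inr ⟨x', hx', rfl⟩),
            (ihXL x' hx' (hX.of_mem_L hx') hm hk).2⟩
    · refine Rs_le_Rs (fun hB => ?_) fun b hb => ?_
      · rw [ra_add, ra_addWait]
        exact Rs_add_le_add hm fun s hs => hX.le_ra (R_add_eq_nil.1 hB).2 hs
      · rcases mem_R_add.1 hb with ⟨t, ht, rfl⟩ | ⟨x', hx', rfl⟩
        · simp at ht
        · exact ⟨G.add x', mem_R_add.2 (.inr ⟨x', hx', rfl⟩),
            (ihXR x' hx' (hX.of_mem_R hx') hm hk).1⟩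

theorem ge_num_add_conj_wait {G : SG} {k : ℕ} (hm : ∀ s ∈ G.atomList, m ≤ s)
    (hk : G.birthday ≤ k) : G.Ge ((num m).add (wait k).conj) := by
  rw [num_add_conj_wait]
  exact fun X hX => stops_subWait_add_le G X hX hm hk

theorem num_add_wait_ge {G : SG} {k : ℕ} (hm : ∀ s ∈ G.atomList, s ≤ m)
    (hk : G.birthday ≤ k) : ((num m).add (wait k)).Ge G := by
  rw [num_add_wait]
  exact fun X hX => stops_add_le_addWait_add G X hX hm hk

end Wait

theorem projection_general (G : SG) :
    (G.Ge (G.subst G.minAtom) ∧ (G.subst G.maxAtom).Ge G) ∧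
    (G.Ge ((num G.minAtom).add (wait G.birthday).conj) ∧
      ((num G.maxAtom).add (wait G.birthday)).Ge G) :=
  ⟨⟨ge_subst fun _ => minAtom_le, subst_ge fun _ => le_maxAtom⟩,
    ge_num_add_conj_wait (fun _ => minAtom_le) le_rfl,
    num_add_wait_ge (fun _ => le_maxAtom) le_rfl⟩

/-- Projection Theorem: `G_min ≼ G ≼ G_max` and
`min(G) - n̂ ≼ G ≼ max(G) + n̂` where `n = b(G)`. -/
theorem projection (G : SG) (hG : G.Guaranteed) :
    (G.Ge (G.subst G.minAtom) ∧ (G.subst G.maxAtom).Ge G) ∧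
    (G.Ge ((num G.minAtom).add (wait G.birthday).conj) ∧
      ((num G.maxAtom).add (wait G.birthday)).Ge G) :=
  projection_general G

end SG
end

section
/- Weak Avoidance Property: if A is an atomic-reversible Left option of a guaranteed scoring game G (i.e., A is reversible through some B ∈ A^R with B ≼ G and B left-atomic, B = ⟨∅^ℓ | B^R⟩), then for any guaranteed game X with at least one Left option, there is a Left option X^L of X such that Rs(A+X) ≤ Rs(G+X^L). -/
namespace SG

/-! In `A + X` Right may move to `B + X`. As `B` has no Left options, Left's best reply there is
some `B + Xˡ`, and `B ≼ G` bounds its Right-stop by that of `G + Xˡ`. -/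

lemma L_add_s13 (G X : SG) : (G.add X).L = G.L.map (·.add X) ++ X.L.map G.add := by
  obtain ⟨a1, b1, L1, R1⟩ := G
  obtain ⟨a2, b2, L2, R2⟩ := X
  rw [add]
  simp [L]

lemma R_add_s13 (G X : SG) : (G.add X).R = G.R.map (·.add X) ++ X.R.map G.add := by
  obtain ⟨a1, b1, L1, R1⟩ := G
  obtain ⟨a2, b2, L2, R2⟩ := X
  rw [add]
  simp [R]

lemma Ls_eq_of_L_ne_nil {G : SG} (h : G.L ≠ []) : Ls G = (G.L.map Rs).maximum.unbotD 0 := by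
  obtain ⟨a, b, ls, rs⟩ := G
  rw [Ls, stops]
  simp_all only [L, ne_eq, List.isEmpty_iff, ↓reduceIte, List.map_subtype, List.unattach_attach]
  rfl

lemma Rs_eq_of_R_ne_nil {G : SG} (h : G.R ≠ []) : Rs G = (G.R.map Ls).minimum.untopD 0 := by
  obtain ⟨a, b, ls, rs⟩ := G
  rw [Rs, stops]
  simp_all only [R, ne_eq, List.isEmpty_iff, ↓reduceIte, List.map_subtype, List.unattach_attach]
  rfl

lemma Rs_le_Ls_of_mem_R_s13 {G Gr : SG} (h : Gr ∈ G.R) : Rs G ≤ Ls Gr := by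
  rw [Rs_eq_of_R_ne_nil (List.ne_nil_of_mem h)]
  exact WithTop.untopD_le (List.minimum_le_of_mem' (List.mem_map_of_mem (f := Ls) h))

lemma exists_mem_L_Ls_eq_Rs {G : SG} (h : G.L ≠ []) : ∃ Gl ∈ G.L, Ls G = Rs Gl := by
  obtain ⟨m, hm⟩ := Option.ne_none_iff_exists'.1
    (List.maximum_ne_bot_of_ne_nil (l := G.L.map Rs) (List.map_eq_nil_iff.not.2 h))
  obtain ⟨Gl, hGl, rfl⟩ := List.mem_map.1 (List.maximum_mem hm)
  exact ⟨Gl, hGl, by rw [Ls_eq_of_L_ne_nil h, hm]; rfl⟩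

lemma Guaranteed.of_mem_L_s13 {G Gl : SG} (hG : G.Guaranteed) (h : Gl ∈ G.L) : Gl.Guaranteed := by
  obtain ⟨a, b, ls, rs⟩ := G
  rw [Guaranteed] at hG
  exact hG.1 Gl h

theorem weak_avoidance_general (G A B X : SG) (hX : X.Guaranteed)
    (hB : B ∈ A.R) (hatom : B.L = []) (hrev : G.Ge B)
    (hXL : X.L ≠ []) : ∃ Xl ∈ X.L, Rs (A.add X) ≤ Rs (G.add Xl) := by
  have hBX : (B.add X).L = X.L.map B.add := by simp [L_add_s13, hatom]
  obtain ⟨_, hl, hLs⟩ := exists_mem_L_Ls_eq_Rs (hBX ▸ List.map_eq_nil_iff.not.2 hXL)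
  obtain ⟨Xl, hXl, rfl⟩ := List.mem_map.1 (hBX ▸ hl)
  refine ⟨Xl, hXl, ?_⟩
  calc Rs (A.add X) ≤ Ls (B.add X) := Rs_le_Ls_of_mem_R_s13
        (R_add_s13 A X ▸ List.mem_append_left _ (List.mem_map_of_mem hB))
    _ = Rs (B.add Xl) := hLs
    _ ≤ Rs (G.add Xl) := (hrev Xl (hX.of_mem_L_s13 hXl)).2

/-- Weak Avoidance Property: nobody wants to move to an atomic-reversible
option. -/
theorem weak_avoidance (G A B X : SG) (hG : G.Guaranteed) (hX : X.Guaranteed)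
    (hA : A ∈ G.L) (hB : B ∈ A.R) (hatom : B.L = []) (hrev : G.Ge B)
    (hXL : X.L ≠ []) : ∃ Xl ∈ X.L, Rs (A.add X) ≤ Rs (G.add Xl) :=
  weak_avoidance_general G A B X hX hB hatom hrev hXL

end SG
end
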